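/- Let V be a finite type, c : V → V → ℝ≥0 a capacity function, S ⊆ V a subset, P ≥ 1 an integer, and let s ∈ S and t ∉ S with s ≠ t. Let c_P be the P-fold replication of S, and let G'' be the weighted directed graph on the vertex type {v : V // v ∉ S} ⊕ S ⊕ S (a first, unreplicated copy of S and a second, reweighted copy of S) with capacities: c u v between u, v ∉ S; c u v from u ∉ S to the first copy of v ∈ S and c v u back; c u v between first-copy vertices u, v ∈ S; (P−1) · c u v from u ∉ S to the second copy of v ∈ S and (P−1) · c v u back; (P−1) · c u v between second-copy vertices u, v ∈ S; and capacity 0 between the two copies of S. Then the maximum flow value from the copy (s,0) of s to the unique copy of t in c_P equals the maximum flow value from the first-copy vertex s to t in G''. -/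

import Mathlib

/-!
Collapsing the copies `(v, i)`, `i ≠ 0`, of each `v ∈ S` into one vertex pushes a flow on the
replication forward to a flow on `G''` of the same value: a pushforward along any vertex map is a
flow for the pushed-forward capacities, and those of the replication are exactly the capacities of
`G''`. Conversely, routing the second copy of `S` in `G''` through copy `i` gives, for each `i`, a
pushforward of a flow on `G''` to the replication; its capacities are `P - 1` times too large on
copy `i`, but the average over `i ≠ 0` (for `P = 1`: the single pushforward onto copy `0`, where
the second copy carries no capacity) respects the capacities of the replication. Both
constructions preserve values, so the two sets of flow values coincide.
-/

open Finset

attribute [local instance] Classical.propDecidable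

noncomputable section

/-- `f` is an `s`-`t` flow for the capacity function `c`. -/
def IsFlow {W : Type*} [Fintype W] (c : W → W → NNReal) (s t : W) (f : W → W → ℝ) : Prop :=
  (∀ u v, 0 ≤ f u v ∧ f u v ≤ (c u v : ℝ)) ∧
  ∀ v, v ≠ s → v ≠ t → (∑ u, f u v) = (∑ w, f v w)

/-- The value of a flow `f` with source `s`. -/
def flowValue {W : Type*} [Fintype W] (f : W → W → ℝ) (s : W) : ℝ :=
  (∑ w, f s w) - (∑ u, f u s)

/-- The maximum `s`-`t` flow value (the greatest value attained by an `s`-`t` flow). -/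
def maxFlowValue {W : Type*} [Fintype W] (c : W → W → NNReal) (s t : W) : ℝ :=
  sSup {μ : ℝ | ∃ f, IsFlow c s t f ∧ flowValue f s = μ}

/-- The capacity function of the `P`-fold replication of the subset `S`. -/
def repCap {V : Type*} (c : V → V → NNReal) (S : Set V) (P : ℕ) :
    ({v : V // v ∉ S} ⊕ (↥S × Fin P)) → ({v : V // v ∉ S} ⊕ (↥S × Fin P)) → NNReal
  | Sum.inl u, Sum.inl v => c u.1 v.1
  | Sum.inl u, Sum.inr (v, _) => c u.1 v.1
  | Sum.inr (v, _), Sum.inl u => c v.1 u.1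
  | Sum.inr (u, i), Sum.inr (v, j) => if i = j then c u.1 v.1 else 0

/-- The capacity function of the graph `G''` on `{v // v ∉ S} ⊕ (S ⊕ S)`, where the
first copy of `S` is unreplicated and the second copy is `(P-1)`-reweighted, and the
two copies are not connected to each other. -/
def twoCopyCap {V : Type*} (c : V → V → NNReal) (S : Set V) (P : ℕ) :
    ({v : V // v ∉ S} ⊕ (↥S ⊕ ↥S)) → ({v : V // v ∉ S} ⊕ (↥S ⊕ ↥S)) → NNReal
  | Sum.inl u, Sum.inl v => c u.1 v.1
  | Sum.inl u, Sum.inr (Sum.inl v) => c u.1 v.1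
  | Sum.inr (Sum.inl v), Sum.inl u => c v.1 u.1
  | Sum.inr (Sum.inl u), Sum.inr (Sum.inl v) => c u.1 v.1
  | Sum.inl u, Sum.inr (Sum.inr v) => ((P - 1 : ℕ) : NNReal) * c u.1 v.1
  | Sum.inr (Sum.inr v), Sum.inl u => ((P - 1 : ℕ) : NNReal) * c v.1 u.1
  | Sum.inr (Sum.inr u), Sum.inr (Sum.inr v) => ((P - 1 : ℕ) : NNReal) * c u.1 v.1
  | Sum.inr (Sum.inl _), Sum.inr (Sum.inr _) => 0
  | Sum.inr (Sum.inr _), Sum.inr (Sum.inl _) => 0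

theorem maxFlowValue_eq_of_forall_exists {W W' : Type*} [Fintype W] [Fintype W']
    {c : W → W → NNReal} {c' : W' → W' → NNReal} {s t : W} {s' t' : W'}
    (h : ∀ f, IsFlow c s t f → ∃ f', IsFlow c' s' t' f' ∧ flowValue f' s' = flowValue f s)
    (h' : ∀ f', IsFlow c' s' t' f' → ∃ f, IsFlow c s t f ∧ flowValue f s = flowValue f' s') :
    maxFlowValue c s t = maxFlowValue c' s' t' := by
  unfold maxFlowValue
  congr 1
  ext μ
  constructor
  · rintro ⟨f, hf, rfl⟩
    exact h f hf
  · rintro ⟨f', hf', rfl⟩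
    exact h' f' hf'

section Pushforward

variable {W W' : Type*} [Fintype W] [Fintype W'] [DecidableEq W']

def flowMap {M : Type*} [AddCommMonoid M] (π : W → W') (f : W → W → M) (x y : W') : M :=
  ∑ a with π a = x, ∑ b with π b = y, f a b

theorem sum_flowMap_left (π : W → W') (f : W → W → ℝ) (y : W') :
    ∑ x, flowMap π f x y = ∑ b with π b = y, ∑ a, f a b := by
  unfold flowMap
  rw [Finset.sum_fiberwise _ π (fun a => ∑ b with π b = y, f a b), Finset.sum_comm]

theorem sum_flowMap_right (π : W → W') (f : W → W → ℝ) (x : W') :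
    ∑ y, flowMap π f x y = ∑ a with π a = x, ∑ b, f a b := by
  unfold flowMap
  rw [Finset.sum_comm]
  exact Finset.sum_congr rfl fun a _ => Finset.sum_fiberwise _ π (f a)

theorem IsFlow.map {c : W → W → NNReal} {c' : W' → W' → NNReal} {s t : W}
    {f : W → W → ℝ} (hf : IsFlow c s t f) (π : W → W') (hc : flowMap π c ≤ c') :
    IsFlow c' (π s) (π t) (flowMap π f) := by
  refine ⟨fun x y => ⟨?_, ?_⟩, fun x hxs hxt => ?_⟩
  · exact Finset.sum_nonneg fun a _ => Finset.sum_nonneg fun b _ => (hf.1 a b).1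
  · calc flowMap π f x y ≤ flowMap π (fun a b => (c a b : ℝ)) x y :=
          Finset.sum_le_sum fun a _ => Finset.sum_le_sum fun b _ => (hf.1 a b).2
      _ = flowMap π c x y := by simp only [flowMap, NNReal.coe_sum]
      _ ≤ c' x y := hc x y
  · rw [sum_flowMap_left, sum_flowMap_right]
    refine Finset.sum_congr rfl fun b hb => hf.2 b ?_ ?_ <;> rintro rfl <;> simp_all

theorem flowValue_flowMap {c : W → W → NNReal} {s t : W} {f : W → W → ℝ}
    (hf : IsFlow c s t f) (π : W → W') (hst : π s ≠ π t) :
    flowValue (flowMap π f) (π s) = flowValue f s := by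
  rw [flowValue, sum_flowMap_left, sum_flowMap_right, ← Finset.sum_sub_distrib]
  refine (Finset.sum_eq_single_of_mem s (by simp) fun b hb hbs => ?_).trans rfl
  have hbt : b ≠ t := by rintro rfl; simp_all
  rw [hf.2 b hbs hbt, sub_self]

end Pushforward

section Mixture

variable {W ι : Type*} [Fintype W] [Fintype ι]

theorem IsFlow.sum_smul {c : ι → W → W → NNReal} {c' : W → W → NNReal} {s t : W}
    {f : ι → W → W → ℝ} (hf : ∀ i, IsFlow (c i) s t (f i)) (w : ι → NNReal)
    (hc : ∑ i, w i • c i ≤ c') : IsFlow c' s t (∑ i, (w i : ℝ) • f i) := by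
  refine ⟨fun u v => ⟨?_, ?_⟩, fun v hvs hvt => ?_⟩
  · simp only [Finset.sum_apply, Pi.smul_apply, smul_eq_mul]
    exact Finset.sum_nonneg fun i _ => mul_nonneg (w i).2 ((hf i).1 u v).1
  · calc (∑ i, (w i : ℝ) • f i) u v ≤ ∑ i, (w i : ℝ) * c i u v := by
          simp only [Finset.sum_apply, Pi.smul_apply, smul_eq_mul]
          exact Finset.sum_le_sum fun i _ => mul_le_mul_of_nonneg_left ((hf i).1 u v).2 (w i).2
      _ = (∑ i, w i • c i) u v := by simp [Finset.sum_apply]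
      _ ≤ c' u v := hc u v
  · simp only [Finset.sum_apply, Pi.smul_apply, smul_eq_mul]
    rw [Finset.sum_comm, Finset.sum_comm (f := fun x i => (w i : ℝ) * f i v x)]
    simp only [← Finset.mul_sum, (hf _).2 v hvs hvt]

theorem flowValue_sum_smul (f : ι → W → W → ℝ) (w : ι → ℝ) (s : W) :
    flowValue (∑ i, w i • f i) s = ∑ i, w i * flowValue (f i) s := by
  simp only [flowValue, Finset.sum_apply, Pi.smul_apply, smul_eq_mul, mul_sub,
    Finset.sum_sub_distrib, Finset.mul_sum]
  rw [Finset.sum_comm, Finset.sum_comm (f := fun x i => w i * f i x s)]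

end Mixture

section Replication

variable {V : Type*} [Fintype V] {S : Set V} {P : ℕ}

def repToTwoCopy (i₀ : Fin P) :
    ({v : V // v ∉ S} ⊕ (↥S × Fin P)) → ({v : V // v ∉ S} ⊕ (↥S ⊕ ↥S))
  | .inl u => .inl u
  | .inr (v, i) => if i = i₀ then .inr (.inl v) else .inr (.inr v)

def twoCopyToRep (i₀ i : Fin P) :
    ({v : V // v ∉ S} ⊕ (↥S ⊕ ↥S)) → ({v : V // v ∉ S} ⊕ (↥S × Fin P))
  | .inl u => .inl u
  | .inr (.inl v) => .inr (v, i₀)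
  | .inr (.inr v) => .inr (v, i)

section Fibres

variable {M : Type*} [AddCommMonoid M]

theorem sum_filter_repToTwoCopy_eq_inl (i₀ : Fin P)
    (F : {v : V // v ∉ S} ⊕ (↥S × Fin P) → M) (u : {v : V // v ∉ S}) :
    ∑ a with repToTwoCopy i₀ a = .inl u, F a = F (.inl u) := by
  rw [Finset.sum_filter]
  simp [repToTwoCopy, ite_eq_iff]

theorem sum_filter_repToTwoCopy_eq_inr_inl (i₀ : Fin P)
    (F : {v : V // v ∉ S} ⊕ (↥S × Fin P) → M) (v : S) :
    ∑ a with repToTwoCopy i₀ a = .inr (.inl v), F a = F (.inr (v, i₀)) := by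
  rw [Finset.sum_filter]
  simp [repToTwoCopy, ite_eq_iff, Fintype.sum_prod_type, and_comm, ite_and]

theorem sum_filter_repToTwoCopy_eq_inr_inr (i₀ : Fin P)
    (F : {v : V // v ∉ S} ⊕ (↥S × Fin P) → M) (v : S) :
    ∑ a with repToTwoCopy i₀ a = .inr (.inr v), F a = ∑ i ∈ univ.erase i₀, F (.inr (v, i)) := by
  rw [Finset.sum_filter, Fintype.sum_sum_type, Fintype.sum_prod_type, Fintype.sum_eq_single v,
    ← Finset.filter_ne', Finset.sum_filter]
  · simp [repToTwoCopy]
  · intro w hw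
    simp [repToTwoCopy, ite_eq_iff, hw]

theorem sum_filter_twoCopyToRep_eq_inl (i₀ i : Fin P)
    (F : {v : V // v ∉ S} ⊕ (↥S ⊕ ↥S) → M) (u : {v : V // v ∉ S}) :
    ∑ x with twoCopyToRep i₀ i x = .inl u, F x = F (.inl u) := by
  rw [Finset.sum_filter]
  simp [twoCopyToRep]

theorem sum_filter_twoCopyToRep_eq_inr (i₀ i : Fin P)
    (F : {v : V // v ∉ S} ⊕ (↥S ⊕ ↥S) → M) (v : S) (j : Fin P) :
    ∑ x with twoCopyToRep i₀ i x = .inr (v, j), F x =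
      (if i₀ = j then F (.inr (.inl v)) else 0) + (if i = j then F (.inr (.inr v)) else 0) := by
  rw [Finset.sum_filter]
  simp [twoCopyToRep, ite_and]

end Fibres

theorem flowMap_repToTwoCopy_repCap (c : V → V → NNReal) (i₀ : Fin P) :
    flowMap (repToTwoCopy i₀) (repCap c S P) = twoCopyCap c S P := by
  have hcard : (univ.erase i₀).card = P - 1 := by simp
  funext x y
  rcases x with u | v | v <;> rcases y with u' | v' | v' <;>
    simp only [flowMap, sum_filter_repToTwoCopy_eq_inl, sum_filter_repToTwoCopy_eq_inr_inl,
      sum_filter_repToTwoCopy_eq_inr_inr]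
  all_goals simp [repCap, twoCopyCap, hcard]
  rw [Finset.sum_ite_of_false (fun i hi => Finset.ne_of_mem_erase hi)]
  simp [hcard]

/-- `w j` is the share of the `(P - 1)`-fold second copy of `S` routed through copy `j`; copy `i₀`
also carries the whole first copy, so it can take no share once `P ≥ 2`. -/
def IsCopyWeights (i₀ : Fin P) (w : Fin P → NNReal) : Prop :=
  ∑ i, w i = 1 ∧ ∀ j, (if i₀ = j then 1 else 0) + w j * (P - 1 : ℕ) ≤ 1

theorem exists_isCopyWeights (i₀ : Fin P) : ∃ w, IsCopyWeights i₀ w := by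
  obtain rfl | hP := eq_or_ne P 1
  · exact ⟨1, by simp, fun j => by simp [Subsingleton.elim i₀ j]⟩
  have hP1 : ((P - 1 : ℕ) : NNReal) ≠ 0 := by have := i₀.pos; norm_cast; omega
  refine ⟨fun j => if i₀ = j then 0 else ((P - 1 : ℕ) : NNReal)⁻¹, ?_, fun j => ?_⟩
  · rw [Finset.sum_ite, Finset.sum_const_zero, zero_add, Finset.sum_const, Finset.filter_ne,
      Finset.card_erase_of_mem (Finset.mem_univ _), Finset.card_univ, Fintype.card_fin,
      nsmul_eq_mul, mul_inv_cancel₀ hP1]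
  · dsimp only
    split_ifs
    · rw [zero_mul, add_zero]
    · rw [inv_mul_cancel₀ hP1, zero_add]

theorem IsCopyWeights.sum_mul_le {i₀ : Fin P} {w : Fin P → NNReal} (hw : IsCopyWeights i₀ w)
    (j : Fin P) (x : NNReal) :
    ∑ i, w i * ((if i₀ = j then x else 0) + if i = j then ((P - 1 : ℕ) : NNReal) * x else 0)
      ≤ x := by
  calc _ = (if i₀ = j then x else 0) + w j * ((P - 1 : ℕ) * x) := by
        rw [Finset.sum_congr rfl fun i _ => mul_add _ _ _, Finset.sum_add_distrib,
          ← Finset.sum_mul, hw.1, one_mul]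
        simp
    _ = ((if i₀ = j then 1 else 0) + w j * (P - 1 : ℕ)) * x := by split_ifs <;> ring
    _ ≤ 1 * x := mul_le_mul_left (hw.2 j) x
    _ = x := one_mul x

theorem sum_smul_flowMap_twoCopyToRep_le_repCap (c : V → V → NNReal) {i₀ : Fin P}
    {w : Fin P → NNReal} (hw : IsCopyWeights i₀ w) :
    ∑ i, w i • flowMap (twoCopyToRep i₀ i) (twoCopyCap c S P) ≤ repCap c S P := by
  intro a b
  rcases a with u | ⟨u, j⟩ <;> rcases b with u' | ⟨v, k⟩ <;>
    simp only [Finset.sum_apply, Pi.smul_apply, flowMap, sum_filter_twoCopyToRep_eq_inl,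
      sum_filter_twoCopyToRep_eq_inr]
  · simp [repCap, twoCopyCap, ← Finset.sum_mul, hw.1]
  · simpa [repCap, twoCopyCap] using hw.sum_mul_le k (c u v)
  · simpa [repCap, twoCopyCap] using hw.sum_mul_le j (c u u')
  · obtain rfl | hjk := eq_or_ne j k
    · simpa +contextual [repCap, twoCopyCap] using hw.sum_mul_le j (c u v)
    · simp +contextual [repCap, twoCopyCap, hjk]

end Replication

theorem maxFlow_repCap_eq_maxFlow_twoCopy {V : Type*} [Fintype V]
    (c : V → V → NNReal) (S : Set V) (P : ℕ) (hP : 1 ≤ P)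
    (s t : V) (hsS : s ∈ S) (ht : t ∉ S) :
    maxFlowValue (repCap c S P)
      (Sum.inr (⟨s, hsS⟩, (⟨0, by omega⟩ : Fin P))) (Sum.inl ⟨t, ht⟩) =
    maxFlowValue (twoCopyCap c S P)
      (Sum.inr (Sum.inl ⟨s, hsS⟩)) (Sum.inl ⟨t, ht⟩) := by
  set i₀ : Fin P := ⟨0, by omega⟩
  apply maxFlowValue_eq_of_forall_exists
  · intro f hf
    refine ⟨flowMap (repToTwoCopy i₀) f, ?_, flowValue_flowMap hf _ (by simp [repToTwoCopy])⟩
    simpa [repToTwoCopy] using hf.map (repToTwoCopy i₀) (flowMap_repToTwoCopy_repCap c i₀).le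
  · intro g hg
    obtain ⟨w, hw⟩ := exists_isCopyWeights i₀
    have hvalue (i : Fin P) : flowValue (flowMap (twoCopyToRep i₀ i) g) (.inr (⟨s, hsS⟩, i₀)) =
        flowValue g (.inr (.inl ⟨s, hsS⟩)) :=
      flowValue_flowMap hg (twoCopyToRep i₀ i) (by simp [twoCopyToRep])
    refine ⟨∑ i, (w i : ℝ) • flowMap (twoCopyToRep i₀ i) g,
      IsFlow.sum_smul (fun i => hg.map (twoCopyToRep i₀ i) le_rfl) w
        (sum_smul_flowMap_twoCopyToRep_le_repCap c hw), ?_⟩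
    rw [flowValue_sum_smul, Finset.sum_congr rfl fun i _ => congrArg _ (hvalue i),
      ← Finset.sum_mul, ← NNReal.coe_sum, hw.1, NNReal.coe_one, one_mul]

end
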